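/- arXiv:math/0503496 — 5 statements merged into one kernel-verified Lean document; each statement's English description precedes it below -/
import Mathlib

section
/- Let P be a slicing of a triangulated category D and let V be a nonzero object of D with a Harder–Narasimhan filtration with filtration objects 0 = F_{n+1}V, F_nV, …, F_1V, F_0V = V and semistable factors A_j ∈ P(φ_j) (φ_n > φ_{n−1} > ⋯ > φ_0). Fix 1 ≤ k ≤ n and let F_kV → V → V' →⁺ be any distinguished triangle whose first morphism is the composition of the filtration morphisms F_kV → F_{k−1}V → ⋯ → F_0V = V. Then F_kV admits a Harder–Narasimhan filtration with semistable factors A_n, A_{n−1}, …, A_k, and V' admits a Harder–Narasimhan filtration with semistable factors A_{k−1}, A_{k−2}, …, A_0. -/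
open CategoryTheory CategoryTheory.Limits CategoryTheory.Pretriangulated

universe v u

variable (D : Type u) [Category.{v} D] [HasZeroObject D] [HasShift D ℤ] [Preadditive D]
  [∀ n : ℤ, (shiftFunctor D n).Additive] [Pretriangulated D]

/-- A slicing `P` of a triangulated category `D`: for every real number `φ`, a full additive
subcategory `P φ` (given by a predicate on objects), closed under isomorphisms, such that
(i) `P (φ + 1) = P φ ⟦1⟧` and (ii) `Hom(A₁, A₂) = 0` whenever `A₁ ∈ P φ₁`, `A₂ ∈ P φ₂` and
`φ₁ > φ₂`. -/
structure Slicing where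
  /-- the objects of the slice with phase `φ` -/
  P : ℝ → D → Prop
  mem_of_iso : ∀ {φ : ℝ} {X Y : D}, (X ≅ Y) → P φ X → P φ Y
  zero_mem : ∀ (φ : ℝ) (X : D), IsZero X → P φ X
  sum_mem : ∀ (φ : ℝ) (X Y : D), P φ X → P φ Y → P φ (X ⊞ Y)
  shift_mem : ∀ (φ : ℝ) (X : D), P φ X → P (φ + 1) (X⟦(1 : ℤ)⟧)
  shift_mem' : ∀ (φ : ℝ) (X : D), P (φ + 1) (X⟦(1 : ℤ)⟧) → P φ X
  hom_zero : ∀ {φ₁ φ₂ : ℝ}, φ₂ < φ₁ → ∀ {A₁ A₂ : D}, P φ₁ A₁ → P φ₂ A₂ →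
    ∀ f : A₁ ⟶ A₂, f = 0

variable {D}

/-- A Harder–Narasimhan filtration of a (necessarily nonzero) object `X` with respect to a
slicing `S`: a finite collection of distinguished triangles
`F (j+1) → F j → A j →⁺ (F (j+1))⟦1⟧` for `0 ≤ j ≤ n`, with `F 0 = X`, `F (n+1) = 0`, where
each `A j` is a nonzero object of `S.P (phase j)` and
`phase n > phase (n-1) > ⋯ > phase 0`.
(The semistable HN-factors are `A n, …, A 0`; `φ₊(X) = phase n` and `φ₋(X) = phase 0`.) -/
structure HNFiltration (S : Slicing D) (X : D) where
  /-- the number of steps: there are `n + 1` HN-factors `A 0, …, A n` -/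
  n : ℕ
  /-- the filtration objects -/
  F : ℕ → D
  /-- the semistable factors -/
  A : ℕ → D
  /-- the phases of the factors -/
  phase : ℕ → ℝ
  f : ∀ j : ℕ, F (j + 1) ⟶ F j
  g : ∀ j : ℕ, F j ⟶ A j
  h : ∀ j : ℕ, A j ⟶ (F (j + 1))⟦(1 : ℤ)⟧
  F_zero : F 0 = X
  isZero_top : IsZero (F (n + 1))
  mem : ∀ j ≤ n, S.P (phase j) (A j)
  nonzero : ∀ j ≤ n, ¬ IsZero (A j)
  dist : ∀ j ≤ n, (Triangle.mk (f j) (g j) (h j) ∈ distTriang D)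
  phase_lt : ∀ j : ℕ, j + 1 ≤ n → phase j < phase (j + 1)

/-- The composite `F k ⟶ F (k-1) ⟶ ⋯ ⟶ F 0` of the filtration morphisms of a
Harder–Narasimhan filtration. -/
def HNFiltration.toTop {S : Slicing D} {X : D} (H : HNFiltration S X) :
    ∀ k : ℕ, H.F k ⟶ H.F 0
  | 0 => 𝟙 _
  | k + 1 => H.f k ≫ H.toTop k

/-!
The cone `V'` of `F k ⟶ V` is taken apart one factor at a time: an octahedron on
`F k ⟶ F 1 ⟶ F 0` exhibits `V'` as an extension of `A 0` by the cone of `F k ⟶ F 1`, and the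
latter is handled by induction, applied to the tail `F 1 ← F 2 ← ⋯` of the filtration. Since only
the pretriangulated axioms are available, this octahedron is built by hand. It exists because
every map `(F l)⟦1⟧ ⟶ A 0` with `l ≥ 1` vanishes (the factors of `(F l)⟦1⟧` have phases
`φ_m + 1 > φ_0`), and under that vanishing a diagram chase shows that the comparison map from
the cone of `F k ⟶ F 1` to the fibre of `V' ⟶ A 0` is an isomorphism. The filtration of `F k`
is simply the tail of that of `V`.
-/

namespace CategoryTheory.Pretriangulated

variable {C : Type*} [Category C] [HasZeroObject C] [HasShift C ℤ] [Preadditive C]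
  [∀ n : ℤ, (shiftFunctor C n).Additive] [Pretriangulated C]

lemma mk_mem_distTriang_of_comp_iso {X Y Y' Z : C} {a : X ⟶ Y} (e : Y ≅ Y') {b : Y' ⟶ Z}
    {c : Z ⟶ X⟦(1 : ℤ)⟧} (h : Triangle.mk (a ≫ e.hom) b c ∈ distTriang C) :
    Triangle.mk a (e.hom ≫ b) c ∈ distTriang C :=
  isomorphic_distinguished _ h _ (Triangle.isoMk _ _ (Iso.refl _) e (Iso.refl _)
    (by unfold Triangle.mk; simp) (by unfold Triangle.mk; simp) (by unfold Triangle.mk; simp))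

section Octahedron

variable {X Y Z W A N U : C} {u : X ⟶ Y} {f : Y ⟶ Z} {π : Z ⟶ W} {ρ : W ⟶ X⟦(1 : ℤ)⟧}
  {g : Z ⟶ A} {h : A ⟶ Y⟦(1 : ℤ)⟧} {πN : Y ⟶ N} {ρN : N ⟶ X⟦(1 : ℤ)⟧}
  {μ : U ⟶ W} {q : W ⟶ A} {ν : A ⟶ U⟦(1 : ℤ)⟧} {θ : N ⟶ U}

-- `θ` compares the cone `N` of `u` with the fibre `U` of `q : W ⟶ A`, where `W` and `A` are the
-- cones of `u ≫ f` and `f`; the identities assumed of `θ` are the commutativities of the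
-- octahedron it would complete.
lemma mono_of_octahedral_comparison (hN : Triangle.mk u πN ρN ∈ distTriang C)
    (h₁₃ : Triangle.mk (u ≫ f) π ρ ∈ distTriang C) (h₂₃ : Triangle.mk f g h ∈ distTriang C)
    (hQ : Triangle.mk μ q ν ∈ distTriang C) (hqh : ρ ≫ u⟦(1 : ℤ)⟧' = q ≫ h)
    (hθρ : θ ≫ μ ≫ ρ = ρN) (hθπ : πN ≫ θ ≫ μ = f ≫ π) (hθν : h ≫ (πN ≫ θ)⟦(1 : ℤ)⟧' = ν) :
    Mono θ := by
  rw [Preadditive.mono_iff_cancel_zero]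
  intro Q β hβ
  obtain ⟨(y : Q ⟶ Y), (rfl : β = y ≫ πN)⟩ := Triangle.coyoneda_exact₃ _ hN β
    (show β ≫ ρN = 0 by rw [← hθρ, reassoc_of% hβ, zero_comp])
  obtain ⟨(γ : Q ⟶ X), (hγ : y ≫ f = γ ≫ u ≫ f)⟩ := Triangle.coyoneda_exact₂ _ h₁₃ (y ≫ f)
    (show (y ≫ f) ≫ π = 0 by rw [Category.assoc, ← hθπ, reassoc_of% hβ, zero_comp])
  have hu : u ≫ πN = 0 := comp_distTriang_mor_zero₁₂ _ hN
  have ht : (y - γ ≫ u) ≫ πN = y ≫ πN := by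
    rw [Preadditive.sub_comp, Category.assoc, hu, comp_zero, sub_zero]
  obtain ⟨(ε : Q⟦(1 : ℤ)⟧ ⟶ A), (hε : (y - γ ≫ u)⟦(1 : ℤ)⟧' = ε ≫ h)⟩ :=
    Triangle.coyoneda_exact₁ _ h₂₃ _
      (show (y - γ ≫ u)⟦(1 : ℤ)⟧' ≫ f⟦(1 : ℤ)⟧' = 0 by
        rw [← Functor.map_comp, Preadditive.sub_comp, Category.assoc, ← hγ, sub_self,
          Functor.map_zero])
  obtain ⟨(ε' : Q⟦(1 : ℤ)⟧ ⟶ W), (rfl : ε = ε' ≫ q)⟩ := Triangle.coyoneda_exact₃ _ hQ ε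
    (show ε ≫ ν = 0 by
      rw [← hθν, ← Category.assoc, ← hε, ← Functor.map_comp, reassoc_of% ht, ← Category.assoc,
        hβ, Functor.map_zero])
  apply (shiftFunctor C (1 : ℤ)).map_injective
  rw [Functor.map_zero, ← ht, Functor.map_comp, hε]
  simp only [Category.assoc]
  rw [← reassoc_of% hqh, ← Functor.map_comp, hu, Functor.map_zero, comp_zero, comp_zero]

lemma isSplitEpi_of_octahedral_comparison (hN : Triangle.mk u πN ρN ∈ distTriang C)
    (h₁₃ : Triangle.mk (u ≫ f) π ρ ∈ distTriang C) (h₂₃ : Triangle.mk f g h ∈ distTriang C)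
    (hQ : Triangle.mk μ q ν ∈ distTriang C) (hqg : π ≫ q = g) (hqh : ρ ≫ u⟦(1 : ℤ)⟧' = q ≫ h)
    (hθρ : θ ≫ μ ≫ ρ = ρN) (hθπ : πN ≫ θ ≫ μ = f ≫ π) (hθν : h ≫ (πN ≫ θ)⟦(1 : ℤ)⟧' = ν) :
    IsSplitEpi θ := by
  have hμq : μ ≫ q = 0 := comp_distTriang_mor_zero₁₂ _ hQ
  obtain ⟨(b : U ⟶ N), (hb : μ ≫ ρ = b ≫ ρN)⟩ := Triangle.coyoneda_exact₁ _ hN (μ ≫ ρ)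
    (show (μ ≫ ρ) ≫ u⟦(1 : ℤ)⟧' = 0 by rw [Category.assoc, hqh, reassoc_of% hμq, zero_comp])
  obtain ⟨(z : U ⟶ Z), (hz : (𝟙 U - b ≫ θ) ≫ μ = z ≫ π)⟩ :=
    Triangle.coyoneda_exact₃ _ h₁₃ ((𝟙 U - b ≫ θ) ≫ μ) (show ((𝟙 U - b ≫ θ) ≫ μ) ≫ ρ = 0 by
      rw [Category.assoc, Preadditive.sub_comp, Category.id_comp, Category.assoc, hθρ, hb,
        sub_self])
  obtain ⟨(y : U ⟶ Y), (rfl : z = y ≫ f)⟩ := Triangle.coyoneda_exact₂ _ h₂₃ z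
    (show z ≫ g = 0 by rw [← hqg, ← reassoc_of% hz, hμq, comp_zero])
  have hδ : (𝟙 U - b ≫ θ - y ≫ πN ≫ θ) ≫ μ = 0 := by
    rw [Preadditive.sub_comp, hz]
    simp only [Category.assoc, hθπ, sub_self]
  obtain ⟨(ω : U⟦(1 : ℤ)⟧ ⟶ A), (hω : (𝟙 U - b ≫ θ - y ≫ πN ≫ θ)⟦(1 : ℤ)⟧' = ω ≫ ν)⟩ :=
    Triangle.coyoneda_exact₁ _ hQ _
      (show (𝟙 U - b ≫ θ - y ≫ πN ≫ θ)⟦(1 : ℤ)⟧' ≫ μ⟦(1 : ℤ)⟧' = 0 by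
        rw [← Functor.map_comp, hδ, Functor.map_zero])
  let e : U ⟶ Y := (shiftFunctor C (1 : ℤ)).preimage (ω ≫ h)
  have he : 𝟙 U - b ≫ θ - y ≫ πN ≫ θ = e ≫ πN ≫ θ := (shiftFunctor C (1 : ℤ)).map_injective (by
    rw [Functor.map_comp, Functor.map_preimage, hω, Category.assoc, hθν])
  refine IsSplitEpi.mk' ⟨b + y ≫ πN + e ≫ πN, ?_⟩
  rw [Preadditive.add_comp, Preadditive.add_comp, Category.assoc, Category.assoc, ← he]
  abel

lemma exists_octahedral_comparison (hN : Triangle.mk u πN ρN ∈ distTriang C)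
    (h₁₃ : Triangle.mk (u ≫ f) π ρ ∈ distTriang C) (h₂₃ : Triangle.mk f g h ∈ distTriang C)
    (hQ : Triangle.mk μ q ν ∈ distTriang C) (hqg : π ≫ q = g)
    (hX : ∀ φ : X⟦(1 : ℤ)⟧ ⟶ A, φ = 0) (hY : ∀ φ : Y⟦(1 : ℤ)⟧ ⟶ A, φ = 0) :
    ∃ θ : N ⟶ U, θ ≫ μ ≫ ρ = ρN ∧ πN ≫ θ ≫ μ = f ≫ π ∧ h ≫ (πN ≫ θ)⟦(1 : ℤ)⟧' = ν := by
  obtain ⟨(σ : N ⟶ W), (hσπ : πN ≫ σ = f ≫ π), (hσρ : ρN ≫ (𝟙 X)⟦(1 : ℤ)⟧' = σ ≫ ρ)⟩ :=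
    complete_distinguished_triangle_morphism _ _ hN h₁₃ (𝟙 X) f
      (show u ≫ f = 𝟙 X ≫ u ≫ f by rw [Category.id_comp])
  have hσq : σ ≫ q = 0 := by
    obtain ⟨(ψ : X⟦(1 : ℤ)⟧ ⟶ A), (hψ : σ ≫ q = ρN ≫ ψ)⟩ := Triangle.yoneda_exact₃ _ hN (σ ≫ q)
      (show πN ≫ σ ≫ q = 0 by
        rw [reassoc_of% hσπ, hqg]
        exact comp_distTriang_mor_zero₁₂ _ h₂₃)
    rw [hψ, hX ψ, comp_zero]
  obtain ⟨(θ : N ⟶ U), (hθ : σ = θ ≫ μ)⟩ := Triangle.coyoneda_exact₂ _ hQ σ hσq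
  obtain ⟨(π₁ : Y⟦(1 : ℤ)⟧ ⟶ U⟦(1 : ℤ)⟧), (hπ₁ν : h ≫ π₁ = 𝟙 A ≫ ν),
      (hπ₁μ : (-f⟦(1 : ℤ)⟧') ≫ π⟦(1 : ℤ)⟧' = π₁ ≫ (-μ⟦(1 : ℤ)⟧'))⟩ :=
    complete_distinguished_triangle_morphism _ _ (rot_of_distTriang _ h₂₃)
      (rot_of_distTriang _ hQ) π (𝟙 A) (show g ≫ 𝟙 A = π ≫ q by rw [Category.comp_id, hqg])
  rw [Preadditive.neg_comp, Preadditive.comp_neg, neg_inj] at hπ₁μ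
  have hπ₁ : (πN ≫ θ)⟦(1 : ℤ)⟧' = π₁ := by
    obtain ⟨(κ : Y⟦(1 : ℤ)⟧ ⟶ A), (hκ : (πN ≫ θ)⟦(1 : ℤ)⟧' - π₁ = κ ≫ ν)⟩ :=
      Triangle.coyoneda_exact₁ _ hQ _
        (show ((πN ≫ θ)⟦(1 : ℤ)⟧' - π₁) ≫ μ⟦(1 : ℤ)⟧' = 0 by
          rw [Preadditive.sub_comp, ← Functor.map_comp, Category.assoc, ← hθ, hσπ,
            Functor.map_comp, hπ₁μ, sub_self])
    rwa [hY κ, zero_comp, sub_eq_zero] at hκ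
  refine ⟨θ, ?_, ?_, ?_⟩
  · rw [← Category.assoc, ← hθ, ← hσρ, Functor.map_id, Category.comp_id]
  · rw [← hθ, hσπ]
  · rw [hπ₁, hπ₁ν, Category.id_comp]

theorem exists_octahedron_of_shift_hom_eq_zero (h₁₃ : Triangle.mk (u ≫ f) π ρ ∈ distTriang C)
    (h₂₃ : Triangle.mk f g h ∈ distTriang C)
    (hX : ∀ φ : X⟦(1 : ℤ)⟧ ⟶ A, φ = 0) (hY : ∀ φ : Y⟦(1 : ℤ)⟧ ⟶ A, φ = 0) :
    ∃ (U : C) (π' : Y ⟶ U) (ρ' : U ⟶ X⟦(1 : ℤ)⟧) (μ : U ⟶ W) (q : W ⟶ A)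
      (ν : A ⟶ U⟦(1 : ℤ)⟧),
      Triangle.mk u π' ρ' ∈ distTriang C ∧ Triangle.mk μ q ν ∈ distTriang C := by
  obtain ⟨(q : W ⟶ A), (hqg : π ≫ q = 𝟙 Z ≫ g), (hqh : ρ ≫ u⟦(1 : ℤ)⟧' = q ≫ h)⟩ :=
    complete_distinguished_triangle_morphism _ _ h₁₃ h₂₃ u (𝟙 Z)
      (show (u ≫ f) ≫ 𝟙 Z = u ≫ f by rw [Category.comp_id])
  rw [Category.id_comp] at hqg
  obtain ⟨U, μ, ν, hQ⟩ := distinguished_cocone_triangle₁ q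
  obtain ⟨N, πN, ρN, hN⟩ := distinguished_cocone_triangle u
  obtain ⟨θ, hθρ, hθπ, hθν⟩ := exists_octahedral_comparison hN h₁₃ h₂₃ hQ hqg hX hY
  have := mono_of_octahedral_comparison hN h₁₃ h₂₃ hQ hqh hθρ hθπ hθν
  have := isSplitEpi_of_octahedral_comparison hN h₁₃ h₂₃ hQ hqg hqh hθρ hθπ hθν
  have := isIso_of_mono_of_isSplitEpi θ
  refine ⟨U, πN ≫ θ, μ ≫ ρ, μ, q, ν, isomorphic_distinguished _ hN _ ?_, hQ⟩
  refine (Triangle.isoMk (Triangle.mk u πN ρN) (Triangle.mk u (πN ≫ θ) (μ ≫ ρ)) (Iso.refl _)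
    (Iso.refl _) (@asIso _ _ _ _ θ this) ?_ ?_ ?_).symm <;> unfold Triangle.mk <;> simp [hθρ]

end Octahedron

end CategoryTheory.Pretriangulated

namespace HNFiltration

variable {S : Slicing D} {X : D}

lemma strictMonoOn_phase (H : HNFiltration S X) : StrictMonoOn H.phase (Set.Iic H.n) :=
  strictMonoOn_of_lt_add_one Set.ordConnected_Iic fun j _ _ hj => H.phase_lt j hj

lemma shift_F_hom_eq_zero (H : HNFiltration S X) {j l : ℕ} (hjl : j < l) (hl : l ≤ H.n + 1)
    (φ : (H.F l)⟦(1 : ℤ)⟧ ⟶ H.A j) : φ = 0 := by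
  induction hl using Nat.decreasingInduction with
  | self => exact ((shiftFunctor D (1 : ℤ)).map_isZero H.isZero_top).eq_of_src φ 0
  | of_succ l hl ih =>
    have hT := rot_of_distTriang _ (rot_of_distTriang _ (rot_of_distTriang _
      (H.dist l (by omega))))
    obtain ⟨(ψ : (H.A l)⟦(1 : ℤ)⟧ ⟶ H.A j), (hψ : φ = (-(H.g l)⟦(1 : ℤ)⟧') ≫ ψ)⟩ :=
      Triangle.yoneda_exact₂ _ hT φ (show (-(H.f l)⟦(1 : ℤ)⟧') ≫ φ = 0 by
        rw [Preadditive.neg_comp, ih (by omega) ((H.f l)⟦(1 : ℤ)⟧' ≫ φ), neg_zero])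
    have hphase : H.phase j < H.phase l :=
      H.strictMonoOn_phase (Set.mem_Iic.2 (by omega)) (Set.mem_Iic.2 (by omega)) hjl
    have hψ₀ : ψ = 0 := S.hom_zero (by linarith) (S.shift_mem _ _ (H.mem l (by omega)))
      (H.mem j (by omega)) ψ
    rw [hψ, hψ₀, comp_zero]

def tail (H : HNFiltration S X) (hn : 1 ≤ H.n) : HNFiltration S (H.F 1) where
  n := H.n - 1
  F j := H.F (j + 1)
  A j := H.A (j + 1)
  phase j := H.phase (j + 1)
  f j := H.f (j + 1)
  g j := H.g (j + 1)
  h j := H.h (j + 1)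
  F_zero := rfl
  isZero_top := by
    rw [Nat.sub_add_cancel hn]
    exact H.isZero_top
  mem j hj := H.mem (j + 1) (by omega)
  nonzero j hj := H.nonzero (j + 1) (by omega)
  dist j hj := H.dist (j + 1) (by omega)
  phase_lt j hj := H.phase_lt (j + 1) (by omega)

lemma tail_toTop_comp (H : HNFiltration S X) (hn : 1 ≤ H.n) (k : ℕ) :
    (H.tail hn).toTop k ≫ H.f 0 = H.toTop (k + 1) := by
  induction k with
  | zero => exact (Category.id_comp _).trans (Category.comp_id _).symm
  | succ k ih => exact (Category.assoc _ _ _).trans (H.f (k + 1) ≫= ih)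

open ZeroObject in
noncomputable def single {φ : ℝ} {A : D} (hA : S.P φ A) (hA₀ : ¬ IsZero A) :
    HNFiltration S A where
  n := 0
  F
    | 0 => A
    | _ + 1 => 0
  A _ := A
  phase _ := φ
  f _ := 0
  g
    | 0 => 𝟙 A
    | _ + 1 => 0
  h _ := 0
  F_zero := rfl
  isZero_top := isZero_zero D
  mem _ _ := hA
  nonzero _ _ := hA₀
  dist j hj := by
    obtain rfl : j = 0 := Nat.le_zero.mp hj
    exact contractible_distinguished₁ A
  phase_lt j hj := absurd hj (by omega)

def cons {Y U A : D} {φ : ℝ} (H : HNFiltration S U) {μ : U ⟶ Y} {q : Y ⟶ A}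
    {ν : A ⟶ U⟦(1 : ℤ)⟧} (hT : Triangle.mk μ q ν ∈ distTriang D) (hA : S.P φ A)
    (hA₀ : ¬ IsZero A) (hφ : φ < H.phase 0) : HNFiltration S Y where
  n := H.n + 1
  F
    | 0 => Y
    | j + 1 => H.F j
  A
    | 0 => A
    | j + 1 => H.A j
  phase
    | 0 => φ
    | j + 1 => H.phase j
  f
    | 0 => (eqToIso H.F_zero).hom ≫ μ
    | j + 1 => H.f j
  g
    | 0 => q
    | j + 1 => H.g j
  h
    | 0 => ν ≫ (eqToIso H.F_zero).inv⟦(1 : ℤ)⟧'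
    | j + 1 => H.h j
  F_zero := rfl
  isZero_top := H.isZero_top
  mem
    | 0, _ => hA
    | j + 1, hj => H.mem j (by omega)
  nonzero
    | 0, _ => hA₀
    | j + 1, hj => H.nonzero j (by omega)
  dist
    | 0, _ => isomorphic_distinguished _ hT _ (Triangle.isoMk _ _ (eqToIso H.F_zero)
        (Iso.refl _) (Iso.refl _) (by unfold Triangle.mk; simp) (by unfold Triangle.mk; simp)
        (by unfold Triangle.mk; simp))
    | j + 1, hj => H.dist j (by omega)
  phase_lt
    | 0, _ => hφ
    | j + 1, hj => H.phase_lt j (by omega)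

theorem exists_hnFiltration_F (H : HNFiltration S X) {k : ℕ} (hk : k ≤ H.n) :
    ∃ H₁ : HNFiltration S (H.F k), H₁.n + k = H.n ∧
      ∀ j ≤ H₁.n, H₁.phase j = H.phase (j + k) ∧ Nonempty (H₁.A j ≅ H.A (j + k)) := by
  induction k generalizing X with
  | zero => exact ⟨{ H with F_zero := rfl }, rfl, fun _ _ => ⟨rfl, ⟨Iso.refl _⟩⟩⟩
  | succ k ih =>
    have hn : 1 ≤ H.n := by omega
    obtain ⟨H₁, hH₁, hA⟩ := ih (H.tail hn) (show k ≤ H.n - 1 by omega)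
    exact ⟨H₁, show H₁.n + k + 1 = H.n by change H₁.n + k = H.n - 1 at hH₁; omega, hA⟩

theorem exists_hnFiltration_of_toTop_mem_distTriang (H : HNFiltration S X) {k : ℕ}
    (hk₁ : 1 ≤ k) (hk : k ≤ H.n) {V' : D} {v : H.F 0 ⟶ V'} {w : V' ⟶ (H.F k)⟦(1 : ℤ)⟧}
    (hT : Triangle.mk (H.toTop k) v w ∈ distTriang D) :
    ∃ H₂ : HNFiltration S V', H₂.n + 1 = k ∧
      ∀ j ≤ H₂.n, H₂.phase j = H.phase j ∧ Nonempty (H₂.A j ≅ H.A j) := by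
  induction k, hk₁ using Nat.le_induction generalizing X V' with
  | base =>
    obtain ⟨e, -⟩ := exists_iso_of_arrow_iso _ _ hT (H.dist 0 (by omega))
      (Arrow.isoMk (Iso.refl _) (Iso.refl _) (by unfold Triangle.mk; simp [toTop]))
    let e₃ : V' ≅ H.A 0 := Triangle.π₃.mapIso e
    refine ⟨single (S.mem_of_iso e₃.symm (H.mem 0 (by omega)))
      (fun hV' => H.nonzero 0 (by omega) (hV'.of_iso e₃.symm)), rfl, fun j hj => ?_⟩
    obtain rfl : j = 0 := Nat.le_zero.mp hj
    exact ⟨rfl, ⟨e₃⟩⟩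
  | succ k hk₁ ih =>
    have hn : 1 ≤ H.n := by omega
    rw [← H.tail_toTop_comp hn] at hT
    obtain ⟨U, π', ρ', μ, q, ν, hU, hQ⟩ := exists_octahedron_of_shift_hom_eq_zero hT
      (H.dist 0 (by omega)) (H.shift_F_hom_eq_zero (by omega) (by omega))
      (H.shift_F_hom_eq_zero (by omega) (by omega))
    obtain ⟨H₂, hH₂, hA⟩ := ih (H.tail hn) (show k ≤ H.n - 1 by omega) hU
    have hφ : H.phase 0 < H₂.phase 0 := (hA 0 (Nat.zero_le _)).1 ▸ H.phase_lt 0 (by omega)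
    refine ⟨H₂.cons hQ (H.mem 0 (by omega)) (H.nonzero 0 (by omega)) hφ,
      show H₂.n + 1 + 1 = k + 1 by omega, ?_⟩
    rintro (_ | j) hj
    · exact ⟨rfl, ⟨Iso.refl _⟩⟩
    · exact hA j (show j ≤ H₂.n by change j + 1 ≤ H₂.n + 1 at hj; omega)

end HNFiltration

theorem statement3
    {D : Type u} [Category.{v} D] [HasZeroObject D] [HasShift D ℤ] [Preadditive D]
    [∀ n : ℤ, (shiftFunctor D n).Additive] [Pretriangulated D]
    (S : Slicing D) {V : D} (hV : ¬ IsZero V) (H : HNFiltration S V)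
    (k : ℕ) (hk₁ : 1 ≤ k) (hk₂ : k ≤ H.n)
    {V' : D} (v : V ⟶ V') (w : V' ⟶ (H.F k)⟦(1 : ℤ)⟧)
    (hT : Triangle.mk (H.toTop k ≫ eqToHom H.F_zero) v w ∈ distTriang D) :
    (∃ H₁ : HNFiltration S (H.F k), H₁.n + k = H.n ∧
      ∀ j ≤ H₁.n, H₁.phase j = H.phase (j + k) ∧ Nonempty (H₁.A j ≅ H.A (j + k))) ∧
    (∃ H₂ : HNFiltration S V', H₂.n + 1 = k ∧
      ∀ j ≤ H₂.n, H₂.phase j = H.phase j ∧ Nonempty (H₂.A j ≅ H.A j)) :=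
  ⟨H.exists_hnFiltration_F hk₂, H.exists_hnFiltration_of_toTop_mem_distTriang hk₁ hk₂
    (mk_mem_distTriang_of_comp_iso (eqToIso H.F_zero) hT)⟩
end

section
/- Let P be a slicing of a triangulated category D satisfying the octahedral axiom, and let U → X → V →⁺ be a distinguished triangle in D in which U and V are nonzero objects each admitting a Harder–Narasimhan filtration, and φ₋(U) > φ₊(V). Then X admits a Harder–Narasimhan filtration whose sequence of semistable factors (with their phases) is the concatenation of the sequence of semistable factors of U followed by that of V; in particular φ₊(X) = φ₊(U) and φ₋(X) = φ₋(V). -/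
open CategoryTheory CategoryTheory.Limits CategoryTheory.Pretriangulated

universe v u

variable (D : Type u) [Category.{v} D] [HasZeroObject D] [HasShift D ℤ] [Preadditive D]
  [∀ n : ℤ, (shiftFunctor D n).Additive] [Pretriangulated D]

variable {D}

/-!
Induction on the length of the filtration of `V`. Its lowest factor sits in a triangle
`F₁V → V → A₀`; the octahedral axiom applied to `X → V → A₀` gives an object `X₁` with triangles
`U → X₁ → F₁V` and `X₁ → X → A₀`. By induction `X₁` has the concatenated filtration, and `A₀`,
whose phase is below all of its phases, is appended at the bottom to get one of `X`.
-/

namespace CategoryTheory.Pretriangulated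

lemma distTriang_of_iso {X₁ X₂ X₃ Y₁ Y₂ Y₃ : D} {f : X₁ ⟶ X₂} {g : X₂ ⟶ X₃}
    {h : X₃ ⟶ X₁⟦(1 : ℤ)⟧} (hT : Triangle.mk f g h ∈ distTriang D)
    (e₁ : X₁ ≅ Y₁) (e₂ : X₂ ≅ Y₂) (e₃ : X₃ ≅ Y₃) :
    Triangle.mk (e₁.inv ≫ f ≫ e₂.hom) (e₂.inv ≫ g ≫ e₃.hom)
      (e₃.inv ≫ h ≫ e₁.hom⟦(1 : ℤ)⟧') ∈ distTriang D :=
  isomorphic_distinguished _ hT _ <|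
    Triangle.isoMk _ _ e₁.symm e₂.symm e₃.symm
      (by simp [Triangle.mk]) (by simp [Triangle.mk]) (by simp [Triangle.mk])

/-- The octahedral axiom, read on fibres: the fibre of `X → V → B` is an extension of the fibre
of `V → B` by the fibre of `X → V`. -/
lemma exists_distTriang_fiber_comp [IsTriangulated D] {U X V V₁ B : D} {u : U ⟶ X} {v : X ⟶ V}
    {w : V ⟶ U⟦(1 : ℤ)⟧} (hT : Triangle.mk u v w ∈ distTriang D)
    {f : V₁ ⟶ V} {g : V ⟶ B} {h : B ⟶ V₁⟦(1 : ℤ)⟧} (hT' : Triangle.mk f g h ∈ distTriang D) :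
    ∃ (X₁ : D) (a : U ⟶ X₁) (b : X₁ ⟶ V₁) (c : V₁ ⟶ U⟦(1 : ℤ)⟧)
      (f' : X₁ ⟶ X) (h' : B ⟶ X₁⟦(1 : ℤ)⟧),
      Triangle.mk a b c ∈ distTriang D ∧ Triangle.mk f' (v ≫ g) h' ∈ distTriang D := by
  obtain ⟨X₁, f', h', hT''⟩ := distinguished_cocone_triangle₁ (v ≫ g)
  exact ⟨X₁, _, _, _, f', h', (Triangulated.someOctahedron' rfl hT hT' hT'').mem, hT''⟩

end CategoryTheory.Pretriangulated

namespace HNFiltration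

variable {S : Slicing D}

lemma exists_distTriang_zero {V : D} (H : HNFiltration S V) :
    ∃ (f : H.F 1 ⟶ V) (g : V ⟶ H.A 0) (h : H.A 0 ⟶ (H.F 1)⟦(1 : ℤ)⟧),
      Triangle.mk f g h ∈ distTriang D := by
  rcases H with ⟨n, F, A, phase, f, g, h, rfl, -, -, -, dist, -⟩
  exact ⟨f 0, g 0, h 0, dist 0 n.zero_le⟩

lemma nonempty_iso_A_zero_of_n_eq_zero {V : D} (H : HNFiltration S V) (hn : H.n = 0) :
    Nonempty (V ≅ H.A 0) := by
  revert hn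
  rcases H with ⟨n, F, A, phase, f, g, h, rfl, isZero_top, -, -, dist, -⟩
  rintro rfl
  have : IsIso (g 0) := (Triangle.isZero₁_iff_isIso₂ _ (dist 0 le_rfl)).1 isZero_top
  exact ⟨asIso (g 0)⟩

def extendBot {Y X B : D} (H : HNFiltration S Y) (φ : ℝ) (hB : S.P φ B) (hB₀ : ¬ IsZero B)
    (hφ : φ < H.phase 0) {f₀ : Y ⟶ X} {g₀ : X ⟶ B} {h₀ : B ⟶ Y⟦(1 : ℤ)⟧}
    (hT : Triangle.mk f₀ g₀ h₀ ∈ distTriang D) : HNFiltration S X where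
  n := H.n + 1
  F j := Nat.casesOn j X H.F
  A j := Nat.casesOn j B H.A
  phase j := Nat.casesOn j φ H.phase
  f
    | 0 => (eqToIso H.F_zero).hom ≫ f₀
    | j + 1 => H.f j
  g
    | 0 => g₀
    | j + 1 => H.g j
  h
    | 0 => h₀ ≫ (eqToIso H.F_zero).inv⟦(1 : ℤ)⟧'
    | j + 1 => H.h j
  F_zero := rfl
  isZero_top := H.isZero_top
  mem
    | 0, _ => hB
    | j + 1, hj => H.mem j (by omega)
  nonzero
    | 0, _ => hB₀
    | j + 1, hj => H.nonzero j (by omega)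
  dist
    | 0, _ => by
      simpa using distTriang_of_iso hT (eqToIso H.F_zero).symm (Iso.refl X) (Iso.refl B)
    | j + 1, hj => H.dist j (by omega)
  phase_lt
    | 0, _ => hφ
    | j + 1, hj => H.phase_lt j (by omega)

def truncBot {V : D} (H : HNFiltration S V) {m : ℕ} (hm : H.n = m + 1) :
    HNFiltration S (H.F 1) where
  n := m
  F j := H.F (j + 1)
  A j := H.A (j + 1)
  phase j := H.phase (j + 1)
  f j := H.f (j + 1)
  g j := H.g (j + 1)
  h j := H.h (j + 1)
  F_zero := rfl
  isZero_top := hm ▸ H.isZero_top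
  mem j hj := H.mem (j + 1) (by omega)
  nonzero j hj := H.nonzero (j + 1) (by omega)
  dist j hj := H.dist (j + 1) (by omega)
  phase_lt j hj := H.phase_lt (j + 1) (by omega)

/-- Indices increase with the phase, so the factors of `V` come first here, whereas in the
top-down order of the informal statement those of `U` do. -/
def IsConcat {X U V : D} (HX : HNFiltration S X) (HU : HNFiltration S U)
    (HV : HNFiltration S V) : Prop :=
  HX.n = HU.n + HV.n + 1 ∧
    (∀ j ≤ HV.n, HX.phase j = HV.phase j ∧ Nonempty (HX.A j ≅ HV.A j)) ∧
    (∀ i ≤ HU.n, HX.phase (HV.n + 1 + i) = HU.phase i ∧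
      Nonempty (HX.A (HV.n + 1 + i) ≅ HU.A i))

lemma isConcat_extendBot_of_n_eq_zero {U X V : D} (HU : HNFiltration S U)
    (HV : HNFiltration S V) (hn : HV.n = 0) (hφ : HV.phase 0 < HU.phase 0) {f₀ : U ⟶ X}
    {g₀ : X ⟶ HV.A 0} {h₀ : HV.A 0 ⟶ U⟦(1 : ℤ)⟧} (hT : Triangle.mk f₀ g₀ h₀ ∈ distTriang D) :
    (HU.extendBot (HV.phase 0) (HV.mem 0 (Nat.zero_le _)) (HV.nonzero 0 (Nat.zero_le _)) hφ
      hT).IsConcat HU HV := by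
  refine ⟨by simp [extendBot, hn], fun j hj => ?_, fun i _ => ?_⟩
  · obtain rfl : j = 0 := by omega
    exact ⟨rfl, ⟨Iso.refl _⟩⟩
  · rw [show HV.n + 1 + i = i + 1 by omega]
    exact ⟨rfl, ⟨Iso.refl _⟩⟩

lemma IsConcat.extendBot {X₁ X U V : D} {HU : HNFiltration S U} {HV : HNFiltration S V}
    {m : ℕ} (hm : HV.n = m + 1) {H₁ : HNFiltration S X₁} (hc : H₁.IsConcat HU (HV.truncBot hm))
    (hφ : HV.phase 0 < H₁.phase 0) {f₀ : X₁ ⟶ X} {g₀ : X ⟶ HV.A 0} {h₀ : HV.A 0 ⟶ X₁⟦(1 : ℤ)⟧}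
    (hT : Triangle.mk f₀ g₀ h₀ ∈ distTriang D) :
    (H₁.extendBot (HV.phase 0) (HV.mem 0 (Nat.zero_le _)) (HV.nonzero 0 (Nat.zero_le _)) hφ
      hT).IsConcat HU HV := by
  obtain ⟨hn, hlow, hhigh⟩ := hc
  change H₁.n = HU.n + m + 1 at hn
  refine ⟨show H₁.n + 1 = _ by omega, ?_, fun i hi => ?_⟩
  · rintro (_ | j) hj
    · exact ⟨rfl, ⟨Iso.refl _⟩⟩
    · exact hlow j (show j ≤ m by omega)
  · rw [show HV.n + 1 + i = m + 1 + i + 1 by omega]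
    exact hhigh i hi

theorem exists_isConcat_of_distTriang [IsTriangulated D] {U X V : D} (HU : HNFiltration S U)
    (HV : HNFiltration S V) {u : U ⟶ X} {v : X ⟶ V} {w : V ⟶ U⟦(1 : ℤ)⟧}
    (hT : Triangle.mk u v w ∈ distTriang D) (hφ : HV.phase HV.n < HU.phase 0) :
    ∃ HX : HNFiltration S X, HX.IsConcat HU HV := by
  induction hN : HV.n generalizing X V with
  | zero =>
    obtain ⟨e⟩ := HV.nonempty_iso_A_zero_of_n_eq_zero hN
    rw [hN] at hφ
    exact ⟨_, isConcat_extendBot_of_n_eq_zero HU HV hN hφ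
      (distTriang_of_iso hT (Iso.refl U) (Iso.refl X) e)⟩
  | succ m ih =>
    obtain ⟨f, g, h, hV₀⟩ := HV.exists_distTriang_zero
    obtain ⟨X₁, a, b, c, f', h', hU₁, hX₁⟩ := exists_distTriang_fiber_comp hT hV₀
    obtain ⟨H₁, hc⟩ := ih (HV.truncBot hN) hU₁ (by simpa [truncBot, hN] using hφ) rfl
    have hφ₁ : HV.phase 0 < H₁.phase 0 :=
      (hc.2.1 0 (Nat.zero_le _)).1 ▸ HV.phase_lt 0 (by omega)
    exact ⟨_, hc.extendBot hN hφ₁ hX₁⟩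

end HNFiltration

theorem statement4
    {D : Type u} [Category.{v} D] [HasZeroObject D] [HasShift D ℤ] [Preadditive D]
    [∀ n : ℤ, (shiftFunctor D n).Additive] [Pretriangulated D] [IsTriangulated D]
    (S : Slicing D) {U X V : D} (hU : ¬ IsZero U) (hV : ¬ IsZero V)
    (HU : HNFiltration S U) (HV : HNFiltration S V)
    (u : U ⟶ X) (v : X ⟶ V) (w : V ⟶ U⟦(1 : ℤ)⟧)
    (hT : Triangle.mk u v w ∈ distTriang D)
    (hφ : HV.phase HV.n < HU.phase 0) :
    ∃ HX : HNFiltration S X, HX.n = HU.n + HV.n + 1 ∧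
      (∀ j ≤ HV.n, HX.phase j = HV.phase j ∧ Nonempty (HX.A j ≅ HV.A j)) ∧
      (∀ i ≤ HU.n, HX.phase (HV.n + 1 + i) = HU.phase i ∧
        Nonempty (HX.A (HV.n + 1 + i) ≅ HU.A i)) ∧
      HX.phase HX.n = HU.phase HU.n ∧ HX.phase 0 = HV.phase 0 := by
  obtain ⟨HX, hn, hlow, hhigh⟩ := HU.exists_isConcat_of_distTriang HV hT hφ
  refine ⟨HX, hn, hlow, hhigh, ?_, (hlow 0 (Nat.zero_le _)).1⟩
  rw [hn, show HU.n + HV.n + 1 = HV.n + 1 + HU.n by omega]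
  exact (hhigh HU.n le_rfl).1
end

section
/- Let A be an abelian category, D = D^b(A) its bounded derived category with cohomology functors H^i, and let P be a slicing of D compatible with the standard t-structure, i.e. for every integer n and every φ ∈ (n, n+1], every object of P(φ) is isomorphic to M[n] for some object M of A. Let X be a nonzero object of D with a Harder–Narasimhan filtration with semistable factors A_n, …, A_0 of strictly decreasing phases, and suppose k is an integer such that A_0[k] is isomorphic to an object of A (placed in cohomological degree 0). Then H^k(X) ≠ 0. In particular, if H^i(X) = 0 for all i > m, then H^i(A_j) = 0 for all i > m and all 0 ≤ j ≤ n. -/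
open CategoryTheory CategoryTheory.Limits CategoryTheory.Pretriangulated

universe v u

variable (D : Type u) [Category.{v} D] [HasZeroObject D] [HasShift D ℤ] [Preadditive D]
  [∀ n : ℤ, (shiftFunctor D n).Additive] [Pretriangulated D]

variable {D}

/-!
STATEMENT 5:
Let `A` be an abelian category, `D = D^b(A)` its (bounded) derived category with cohomology
functors `H^i`, and `P` a slicing compatible with the standard t-structure: for every `n : ℤ`
and `φ ∈ (n, n+1]`, every object of `P φ` is isomorphic to `M[n]` for some `M` in `A`.
Let `X ≠ 0` have a Harder–Narasimhan filtration with factors `A n, …, A 0` (decreasing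
phases) and suppose `k : ℤ` is such that `A 0 ⟦k⟧` is isomorphic to an object of `A` placed
in degree `0`. Then `H^k(X) ≠ 0`. In particular, if `H^i(X) = 0` for all `i > m`, then
`H^i(A j) = 0` for all `i > m` and all `0 ≤ j ≤ n`.
-/

section Aux

variable {A : Type u} [Category.{v} A] [Abelian A] [HasDerivedCategory A]

/-- Shift compatibility of homology functors on the derived category. -/
noncomputable def homologyShiftIso (Z : DerivedCategory A) (n a a' : ℤ) (h : n + a = a') :
    (DerivedCategory.homologyFunctor A a).obj (Z⟦n⟧) ≅
      (DerivedCategory.homologyFunctor A a').obj Z :=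
  ((DerivedCategory.homologyFunctor A 0).shiftIso n a a' h).app Z

/-- Homology of a single object in the derived category. -/
noncomputable def singleHomologyIso (M : A) (i : ℤ) :
    (DerivedCategory.homologyFunctor A i).obj ((DerivedCategory.singleFunctor A 0).obj M) ≅
      ((HomologicalComplex.single A (ComplexShape.up ℤ) 0).obj M).homology i :=
  (DerivedCategory.homologyFunctorFactorsh A i).app _ ≪≫
    (HomotopyCategory.homologyFunctorFactors A (ComplexShape.up ℤ) i).app _

lemma isZero_homology_shift_single {Z : DerivedCategory A} {N : A} {c : ℤ}
    (e : Z ≅ ((DerivedCategory.singleFunctor A 0).obj N)⟦c⟧) (i : ℤ) (hi : i ≠ -c) :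
    IsZero ((DerivedCategory.homologyFunctor A i).obj Z) := by
  refine IsZero.of_iso ?_
    ((DerivedCategory.homologyFunctor A i).mapIso e ≪≫
      homologyShiftIso _ c i (c + i) rfl ≪≫ singleHomologyIso N (c + i))
  exact HomologicalComplex.isZero_single_obj_homology _ _ _ _ (by omega)

lemma not_isZero_homology_of_shift_single {Z : DerivedCategory A} {N : A} {k : ℤ}
    (hZ : ¬ IsZero Z)
    (e : Z⟦k⟧ ≅ (DerivedCategory.singleFunctor A 0).obj N) :
    ¬ IsZero ((DerivedCategory.homologyFunctor A k).obj Z) := by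
  intro h
  have h0 : IsZero ((DerivedCategory.homologyFunctor A 0).obj (Z⟦k⟧)) :=
    h.of_iso (homologyShiftIso Z k 0 k (add_zero k))
  have hN : IsZero N :=
    h0.of_iso ((HomologicalComplex.singleObjHomologySelfIso
        (ComplexShape.up ℤ) 0 N).symm ≪≫ (singleHomologyIso N 0).symm ≪≫
      (DerivedCategory.homologyFunctor A 0).mapIso e.symm)
  have hZk : IsZero (Z⟦k⟧) :=
    ((DerivedCategory.singleFunctor A 0).map_isZero hN).of_iso e
  exact hZ (IsZero.of_iso ((shiftFunctor (DerivedCategory A) (-k)).map_isZero hZk)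
    ((shiftEquiv (DerivedCategory A) k).unitIso.app Z))

end Aux

theorem statement5
    {A : Type u} [Category.{v} A] [Abelian A] [HasDerivedCategory A]
    (S : Slicing (DerivedCategory A))
    (hcompat : ∀ (n : ℤ) (φ : ℝ), (n : ℝ) < φ → φ ≤ (n : ℝ) + 1 →
      ∀ Z : DerivedCategory A, S.P φ Z →
        ∃ M : A, Nonempty (Z ≅ ((DerivedCategory.singleFunctor A 0).obj M)⟦n⟧))
    {X : DerivedCategory A} (hX : ¬ IsZero X) (H : HNFiltration S X)
    (k : ℤ)
    (hk : ∃ M : A, Nonempty ((H.A 0)⟦k⟧ ≅ (DerivedCategory.singleFunctor A 0).obj M)) :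
    ¬ IsZero ((DerivedCategory.homologyFunctor A k).obj X) ∧
    (∀ m : ℤ, (∀ i : ℤ, m < i → IsZero ((DerivedCategory.homologyFunctor A i).obj X)) →
      ∀ j ≤ H.n, ∀ i : ℤ, m < i →
        IsZero ((DerivedCategory.homologyFunctor A i).obj (H.A j))) := by
  obtain ⟨M, ⟨eM⟩⟩ := hk
  have hA0 : ¬ IsZero ((DerivedCategory.homologyFunctor A k).obj (H.A 0)) :=
    not_isZero_homology_of_shift_single (H.nonzero 0 (Nat.zero_le _)) eM
  have hconc : ∀ j, j ≤ H.n → ∃ (cj : ℤ),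
      (∃ N : A, Nonempty (H.A j ≅ ((DerivedCategory.singleFunctor A 0).obj N)⟦cj⟧)) ∧
      (cj : ℝ) < H.phase j ∧ H.phase j ≤ (cj : ℝ) + 1 := by
    intro j hj
    refine ⟨⌈H.phase j⌉ - 1, ?_⟩
    have h1 : ((⌈H.phase j⌉ - 1 : ℤ) : ℝ) < H.phase j := by
      push_cast
      have := Int.ceil_lt_add_one (H.phase j)
      linarith
    have h2 : H.phase j ≤ ((⌈H.phase j⌉ - 1 : ℤ) : ℝ) + 1 := by
      push_cast
      have := Int.le_ceil (H.phase j)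
      linarith
    obtain ⟨N, hN⟩ := hcompat _ _ h1 h2 _ (H.mem j hj)
    exact ⟨⟨N, hN⟩, h1, h2⟩
  choose cf ef hlt hle using hconc
  have hmono : ∀ j (hj : j ≤ H.n), cf 0 (Nat.zero_le _) ≤ cf j hj := by
    intro j
    induction j with
    | zero => intro hj; exact le_refl _
    | succ j ih =>
      intro hj
      have h1 : j ≤ H.n := by omega
      have hp := H.phase_lt j hj
      have a1 := hlt j h1
      have a2 := hle (j + 1) hj
      have hr : (cf j h1 : ℝ) < (cf (j + 1) hj : ℝ) + 1 := by linarith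
      have hz : cf j h1 < cf (j + 1) hj + 1 := by exact_mod_cast hr
      have hstep : cf j h1 ≤ cf (j + 1) hj := by omega
      exact le_trans (ih h1) hstep
  have hk0 : k = -(cf 0 (Nat.zero_le _)) := by
    by_contra hne
    obtain ⟨N, ⟨e⟩⟩ := ef 0 (Nat.zero_le _)
    exact hA0 (isZero_homology_shift_single e k hne)
  have hAvan : ∀ j, ∀ hj : j ≤ H.n, ∀ i : ℤ, k < i →
      IsZero ((DerivedCategory.homologyFunctor A i).obj (H.A j)) := by
    intro j hj i hi
    obtain ⟨N, ⟨e⟩⟩ := ef j hj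
    refine isZero_homology_shift_single e i ?_
    have := hmono j hj
    omega
  have key : ∀ d : ℕ, ∀ i : ℤ, k < i →
      IsZero ((DerivedCategory.homologyFunctor A i).obj (H.F (H.n + 1 - d))) := by
    intro d
    induction d with
    | zero =>
      intro i hi
      exact (DerivedCategory.homologyFunctor A i).map_isZero H.isZero_top
    | succ d ih =>
      intro i hi
      by_cases hd : H.n + 1 ≤ d
      · have heq : H.n + 1 - (d + 1) = H.n + 1 - d := by omega
        rw [heq]
        exact ih i hi
      · have hj : H.n + 1 - (d + 1) = H.n - d := by omega
        rw [hj]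
        have hjn : H.n - d ≤ H.n := by omega
        have hS := DerivedCategory.HomologySequence.exact₂ _ (H.dist (H.n - d) hjn) i
        have h1 : IsZero ((DerivedCategory.homologyFunctor A i).obj (H.F (H.n - d + 1))) := by
          have heq : H.n + 1 - d = H.n - d + 1 := by omega
          rw [← heq]
          exact ih i hi
        have h3 := hAvan (H.n - d) hjn i hi
        exact hS.isZero_of_both_zeros (h1.eq_of_src _ _) (h3.eq_of_tgt _ _)
  have key' : ∀ j, j ≤ H.n + 1 → ∀ i : ℤ, k < i →
      IsZero ((DerivedCategory.homologyFunctor A i).obj (H.F j)) := by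
    intro j hj i hi
    have := key (H.n + 1 - j) i hi
    rwa [Nat.sub_sub_self hj] at this
  have claim1 : ¬ IsZero ((DerivedCategory.homologyFunctor A k).obj X) := by
    intro h
    have hS := DerivedCategory.HomologySequence.exact₃ _ (H.dist 0 (Nat.zero_le _)) k (k + 1) rfl
    have h1 : IsZero ((DerivedCategory.homologyFunctor A k).obj (H.F 0)) := by
      rw [H.F_zero]
      exact h
    have h3 := key' 1 (by omega) (k + 1) (by omega)
    exact hA0 (hS.isZero_of_both_zeros (h1.eq_of_src _ _) (h3.eq_of_tgt _ _))
  refine ⟨claim1, ?_⟩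
  intro m hm j hj i hi
  have hkm : k ≤ m := by
    by_contra hcon
    exact claim1 (hm k (by omega))
  exact hAvan j hj i (by omega)
end

section
/- Let P be a slicing of a triangulated category D. Then the Harder–Narasimhan filtration of any nonzero object X of D is unique up to unique isomorphism: if F_{•}X (with factors A_n, …, A_0 of phases φ_n > ⋯ > φ_0) and G_{•}X (with factors B_m, …, B_0 of phases ψ_m > ⋯ > ψ_0) are two Harder–Narasimhan filtrations of X, then n = m, φ_j = ψ_j for all j, and there exist unique isomorphisms f_j : F_jX → G_jX and g_j : A_j → B_j with f_0 = id_X such that for every j the pair (f_{j+1}, f_j, g_j) is an isomorphism of the distinguished triangles F_{j+1}X → F_jX → A_j →⁺ and G_{j+1}X → G_jX → B_j →⁺. -/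
open CategoryTheory CategoryTheory.Limits CategoryTheory.Pretriangulated

universe v u

variable (D : Type u) [Category.{v} D] [HasZeroObject D] [HasShift D ℤ] [Preadditive D]
  [∀ n : ℤ, (shiftFunctor D n).Additive] [Pretriangulated D]

variable {D}

/-!
All factors of `F j` have phase `≥ phase j`, so `Hom(F j, C) = 0` for every semistable `C` of
smaller phase. Now suppose `F j ≅ G j` has been built. Since `g j : F j → A j` is nonzero, this
forces the phases of `A j` and `B j` to agree; the composite `F (j+1) → F j ≅ G j → B j` then
vanishes, so it lifts through `G (j+1) → G j`, uniquely because `Hom(F (j+1), B j⟦-1⟧) = 0`.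
The lift of the inverse is an inverse of the lift by the same uniqueness, and completing the
morphism of triangles gives the isomorphism of factors (five lemma) together with its uniqueness.
-/

namespace CategoryTheory.Pretriangulated

lemma eq_of_comp_mor₁_eq {T : Triangle D} (hT : T ∈ distTriang D) {Y : D}
    (hY : ∀ w : Y ⟶ T.obj₃⟦(-1 : ℤ)⟧, w = 0) {u v : Y ⟶ T.obj₁}
    (h : u ≫ T.mor₁ = v ≫ T.mor₁) : u = v := by
  obtain ⟨w, hw⟩ := Triangle.coyoneda_exact₂ _ (inv_rot_of_distTriang _ hT) (u - v)
    ((Preadditive.sub_comp u v T.mor₁).trans (sub_eq_zero.mpr h))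
  rw [← sub_eq_zero, hw, hY w]
  exact zero_comp

lemma eq_of_mor₂_comp_eq {T : Triangle D} (hT : T ∈ distTriang D) {Y : D}
    (hY : ∀ w : T.obj₁⟦(1 : ℤ)⟧ ⟶ Y, w = 0) {u v : T.obj₃ ⟶ Y}
    (h : T.mor₂ ≫ u = T.mor₂ ≫ v) : u = v := by
  obtain ⟨w, hw⟩ := Triangle.yoneda_exact₃ _ hT (u - v)
    ((Preadditive.comp_sub T.mor₂ u v).trans (sub_eq_zero.mpr h))
  rw [← sub_eq_zero, hw, hY w]
  exact comp_zero

end CategoryTheory.Pretriangulated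

lemma CategoryTheory.shift_one_hom_eq_zero {C : Type*} [Category C] [HasZeroMorphisms C]
    [HasShift C ℤ] {A B : C} (h : ∀ w : A ⟶ B⟦(-1 : ℤ)⟧, w = 0)
    (u : A⟦(1 : ℤ)⟧ ⟶ B) : u = 0 :=
  ((shiftEquiv C (1 : ℤ)).toAdjunction.homEquiv A B).injective ((h _).trans (h _).symm)

namespace Slicing

variable {S : Slicing D}

lemma shift_neg_one_mem {θ : ℝ} {C : D} (hC : S.P θ C) : S.P (θ - 1) (C⟦(-1 : ℤ)⟧) :=
  S.shift_mem' _ _ <| by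
    rw [sub_add_cancel]
    exact S.mem_of_iso ((shiftFunctorCompIsoId D (-1 : ℤ) 1 (by norm_num)).symm.app C) hC

end Slicing

namespace HNFiltration

variable {S : Slicing D} {X : D}

section Filtration

variable (H : HNFiltration S X)

lemma phase_strictMonoOn : StrictMonoOn H.phase (Set.Iic H.n) :=
  strictMonoOn_Iic_of_lt_succ fun m hm => H.phase_lt m (Order.succ_le_of_lt hm)

lemma phase_lt_phase {i j : ℕ} (hij : i < j) (hj : j ≤ H.n) : H.phase i < H.phase j :=
  H.phase_strictMonoOn (hij.le.trans hj) hj hij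

lemma phase_le_phase {i j : ℕ} (hij : i ≤ j) (hj : j ≤ H.n) : H.phase i ≤ H.phase j :=
  H.phase_strictMonoOn.monotoneOn (hij.trans hj) hj hij

lemma hom_F_eq_zero {θ : ℝ} {C : D} (hC : S.P θ C) {k : ℕ} (hk : k ≤ H.n + 1)
    (hθ : ∀ i, k ≤ i → i ≤ H.n → θ < H.phase i) (u : H.F k ⟶ C) : u = 0 := by
  induction hk using Nat.decreasingInduction with
  | self => exact H.isZero_top.eq_of_src _ _
  | of_succ k hk ih =>
    have hfu : H.f k ≫ u = 0 := ih (fun i hi hi' => hθ i (by omega) hi') _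
    obtain ⟨v, rfl⟩ := Triangle.yoneda_exact₂ _ (H.dist k (by omega)) u hfu
    rw [S.hom_zero (hθ k le_rfl (by omega)) (H.mem k (by omega)) hC v]
    exact comp_zero

lemma shift_F_hom_eq_zero_s8 {θ : ℝ} {C : D} (hC : S.P θ C) {k : ℕ} (hk : k ≤ H.n + 1)
    (hθ : ∀ i, k ≤ i → i ≤ H.n → θ < H.phase i + 1) (u : (H.F k)⟦(1 : ℤ)⟧ ⟶ C) : u = 0 :=
  shift_one_hom_eq_zero (H.hom_F_eq_zero (S.shift_neg_one_mem hC) hk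
    fun i hi hi' => by linarith [hθ i hi hi']) u

lemma g_ne_zero {j : ℕ} (hj : j ≤ H.n) : H.g j ≠ 0 := by
  intro hg
  refine H.nonzero j hj ((IsZero.iff_id_eq_zero _).mpr ?_)
  refine eq_of_mor₂_comp_eq (H.dist j hj)
    (H.shift_F_hom_eq_zero_s8 (H.mem j hj) (by omega) fun i hi hi' => ?_) ?_
  · linarith [H.phase_lt_phase hi hi']
  · show H.g j ≫ _ = H.g j ≫ _
    rw [hg, zero_comp, zero_comp]

lemma isZero_F_iff {j : ℕ} (hj : j ≤ H.n + 1) : IsZero (H.F j) ↔ j = H.n + 1 := by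
  refine ⟨fun hz => ?_, fun h => h ▸ H.isZero_top⟩
  by_contra hne
  exact H.g_ne_zero (by omega) (hz.eq_of_src _ _)

end Filtration

section Comparison

variable (H G : HNFiltration S X) {j : ℕ}

lemma phase_le_of_isIso (hjH : j ≤ H.n) (hjG : j ≤ G.n) (a : H.F j ⟶ G.F j) [IsIso a] :
    H.phase j ≤ G.phase j := by
  by_contra! hlt
  have ha : a ≫ G.g j = 0 := H.hom_F_eq_zero (G.mem j hjG) (by omega)
    (fun i hi hi' => hlt.trans_le (H.phase_le_phase hi hi')) _
  exact G.g_ne_zero hjG (by rwa [← cancel_epi a, comp_zero])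

lemma phase_eq_of_isIso (hjH : j ≤ H.n) (hjG : j ≤ G.n) (a : H.F j ⟶ G.F j) [IsIso a] :
    H.phase j = G.phase j :=
  (H.phase_le_of_isIso G hjH hjG a).antisymm (G.phase_le_of_isIso H hjG hjH (inv a))

lemma exists_f_comp_eq (hjH : j ≤ H.n) (hjG : j ≤ G.n) (hph : G.phase j ≤ H.phase j)
    (a : H.F j ⟶ G.F j) : ∃ b, H.f j ≫ a = b ≫ G.f j :=
  Triangle.coyoneda_exact₂ _ (G.dist j hjG) _ <| H.hom_F_eq_zero (G.mem j hjG) (by omega)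
    (fun _ hi hi' => hph.trans_lt (H.phase_lt_phase hi hi')) _

lemma eq_of_comp_f_eq (hjH : j ≤ H.n) (hjG : j ≤ G.n) (hph : G.phase j ≤ H.phase j)
    {b b' : H.F (j + 1) ⟶ G.F (j + 1)} (h : b ≫ G.f j = b' ≫ G.f j) : b = b' :=
  eq_of_comp_mor₁_eq (G.dist j hjG) (H.hom_F_eq_zero (S.shift_neg_one_mem (G.mem j hjG))
    (by omega) fun _ hi hi' => by linarith [H.phase_lt_phase hi hi']) h

lemma eq_of_g_comp_eq (hjH : j ≤ H.n) (hjG : j ≤ G.n) (hph : G.phase j ≤ H.phase j)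
    {c c' : H.A j ⟶ G.A j} (h : H.g j ≫ c = H.g j ≫ c') : c = c' :=
  eq_of_mor₂_comp_eq (H.dist j hjH) (H.shift_F_hom_eq_zero_s8 (G.mem j hjG) (by omega)
    fun _ hi hi' => by linarith [H.phase_lt_phase hi hi']) h

lemma isIso_of_f_comp_eq (hjH : j ≤ H.n) (hjG : j ≤ G.n) (hph : H.phase j = G.phase j)
    (a : H.F j ⟶ G.F j) [IsIso a] {b : H.F (j + 1) ⟶ G.F (j + 1)}
    (hb : H.f j ≫ a = b ≫ G.f j) : IsIso b := by
  obtain ⟨b', hb'⟩ := G.exists_f_comp_eq H hjG hjH hph.le (inv a)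
  refine ⟨b', H.eq_of_comp_f_eq H hjH hjH le_rfl ?_, G.eq_of_comp_f_eq G hjG hjG le_rfl ?_⟩
  · rw [Category.assoc, ← hb', ← Category.assoc, ← hb, Category.assoc, IsIso.hom_inv_id,
      Category.comp_id, Category.id_comp]
  · rw [Category.assoc, ← hb, ← Category.assoc, ← hb', Category.assoc, IsIso.inv_hom_id,
      Category.comp_id, Category.id_comp]

noncomputable def comparison : ∀ j, H.F j ⟶ G.F j
  | 0 => eqToHom (H.F_zero.trans G.F_zero.symm)
  | j + 1 => Classical.epsilon fun b => H.f j ≫ comparison j = b ≫ G.f j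

lemma f_comp_comparison (hjH : j ≤ H.n) (hjG : j ≤ G.n) (hph : G.phase j ≤ H.phase j) :
    H.f j ≫ H.comparison G j = H.comparison G (j + 1) ≫ G.f j :=
  Classical.epsilon_spec (H.exists_f_comp_eq G hjH hjG hph _)

lemma isIso_comparison_of_le : ∀ j, j ≤ H.n + 1 → j ≤ G.n + 1 → IsIso (H.comparison G j)
  | 0, _, _ => by rw [comparison]; infer_instance
  | j + 1, hjH, hjG => by
    have := isIso_comparison_of_le j (by omega) (by omega)
    have hph := H.phase_eq_of_isIso G (by omega) (by omega) (H.comparison G j)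
    exact H.isIso_of_f_comp_eq G (by omega) (by omega) hph _
      (H.f_comp_comparison G (by omega) (by omega) hph.ge)

lemma n_eq : H.n = G.n := by
  -- at `min H.n G.n + 1` one of the two filtration objects is zero, hence so is the other
  have hm := H.isIso_comparison_of_le G (min H.n G.n + 1) (by omega) (by omega)
  have hz := (asIso (H.comparison G (min H.n G.n + 1))).isZero_iff
  rw [H.isZero_F_iff (by omega), G.isZero_F_iff (by omega)] at hz
  omega

lemma isIso_comparison (hj : j ≤ H.n + 1) : IsIso (H.comparison G j) :=
  H.isIso_comparison_of_le G j hj (H.n_eq G ▸ hj)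

lemma phase_eq (hj : j ≤ H.n) : H.phase j = G.phase j :=
  have := H.isIso_comparison G (j := j) (by omega)
  H.phase_eq_of_isIso G hj (H.n_eq G ▸ hj) (H.comparison G j)

lemma f_comp_comparison_eq (hj : j ≤ H.n) :
    H.f j ≫ H.comparison G j = H.comparison G (j + 1) ≫ G.f j :=
  H.f_comp_comparison G hj (H.n_eq G ▸ hj) (H.phase_eq G hj).ge

noncomputable def factorComparison (j : ℕ) : H.A j ⟶ G.A j :=
  Classical.epsilon fun c => H.g j ≫ c = H.comparison G j ≫ G.g j ∧
    H.h j ≫ (H.comparison G (j + 1))⟦(1 : ℤ)⟧' = c ≫ G.h j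

lemma factorComparison_spec (hj : j ≤ H.n) :
    H.g j ≫ H.factorComparison G j = H.comparison G j ≫ G.g j ∧
      H.h j ≫ (H.comparison G (j + 1))⟦(1 : ℤ)⟧' = H.factorComparison G j ≫ G.h j :=
  Classical.epsilon_spec (complete_distinguished_triangle_morphism _ _ (H.dist j hj)
    (G.dist j (H.n_eq G ▸ hj)) _ _ (H.f_comp_comparison_eq G hj))

noncomputable def triangleComparison (hj : j ≤ H.n) :
    Triangle.mk (H.f j) (H.g j) (H.h j) ⟶ Triangle.mk (G.f j) (G.g j) (G.h j) :=
  Triangle.homMk _ _ (H.comparison G (j + 1)) (H.comparison G j) (H.factorComparison G j)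
    (H.f_comp_comparison_eq G hj) (H.factorComparison_spec G hj).1
    (H.factorComparison_spec G hj).2

lemma isIso_factorComparison (hj : j ≤ H.n) : IsIso (H.factorComparison G j) :=
  isIso₃_of_isIso₁₂ (H.triangleComparison G hj) (H.dist j hj) (G.dist j (H.n_eq G ▸ hj))
    (H.isIso_comparison G (by omega)) (H.isIso_comparison G (by omega))

lemma eq_comparison (f' : ∀ j, H.F j ⟶ G.F j)
    (hf'0 : f' 0 = eqToHom (H.F_zero.trans G.F_zero.symm))
    (hf' : ∀ j ≤ H.n, H.f j ≫ f' j = f' (j + 1) ≫ G.f j) :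
    ∀ j ≤ H.n + 1, f' j = H.comparison G j
  | 0, _ => hf'0
  | j + 1, hj => H.eq_of_comp_f_eq G (by omega) (H.n_eq G ▸ (by omega))
    (H.phase_eq G (by omega)).ge <| by
      rw [← hf' j (by omega), eq_comparison f' hf'0 hf' j (by omega),
        H.f_comp_comparison_eq G (by omega)]

end Comparison

end HNFiltration

theorem statement8
    {D : Type u} [Category.{v} D] [HasZeroObject D] [HasShift D ℤ] [Preadditive D]
    [∀ n : ℤ, (shiftFunctor D n).Additive] [Pretriangulated D]
    (S : Slicing D) {X : D} (hX : ¬ IsZero X) (H G : HNFiltration S X) :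
    H.n = G.n ∧ (∀ j ≤ H.n, H.phase j = G.phase j) ∧
    ∃ (f : ∀ j : ℕ, H.F j ⟶ G.F j) (g : ∀ j : ℕ, H.A j ⟶ G.A j),
      f 0 = eqToHom (H.F_zero.trans G.F_zero.symm) ∧
      (∀ j ≤ H.n, IsIso (f j) ∧ IsIso (f (j + 1)) ∧ IsIso (g j)) ∧
      (∀ j ≤ H.n,
        H.f j ≫ f j = f (j + 1) ≫ G.f j ∧
        H.g j ≫ g j = f j ≫ G.g j ∧
        H.h j ≫ (f (j + 1))⟦(1 : ℤ)⟧' = g j ≫ G.h j) ∧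
      (∀ (f' : ∀ j : ℕ, H.F j ⟶ G.F j) (g' : ∀ j : ℕ, H.A j ⟶ G.A j),
        f' 0 = eqToHom (H.F_zero.trans G.F_zero.symm) →
        (∀ j ≤ H.n,
          H.f j ≫ f' j = f' (j + 1) ≫ G.f j ∧
          H.g j ≫ g' j = f' j ≫ G.g j ∧
          H.h j ≫ (f' (j + 1))⟦(1 : ℤ)⟧' = g' j ≫ G.h j) →
        (∀ j ≤ H.n + 1, f' j = f j) ∧ (∀ j ≤ H.n, g' j = g j)) := by
  refine ⟨H.n_eq G, fun j hj => H.phase_eq G hj, H.comparison G, H.factorComparison G, rfl,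
    fun j hj => ⟨H.isIso_comparison G (by omega), H.isIso_comparison G (by omega),
      H.isIso_factorComparison G hj⟩,
    fun j hj => ⟨H.f_comp_comparison_eq G hj, H.factorComparison_spec G hj⟩,
    fun f' g' hf'0 hcomm => ?_⟩
  have hf' := H.eq_comparison G f' hf'0 fun j hj => (hcomm j hj).1
  refine ⟨hf', fun j hj => H.eq_of_g_comp_eq G hj (H.n_eq G ▸ hj) (H.phase_eq G hj).ge ?_⟩
  rw [(hcomm j hj).2.1, hf' j (by omega), (H.factorComparison_spec G hj).1]
end

section
/- Let P be a slicing of a triangulated category D. Suppose f : F → G is an isomorphism in D, and suppose given distinguished triangles F' → F → A →⁺ and G' → G → B →⁺ in which A ∈ P(φ) and B ∈ P(ψ) are nonzero, and F' (respectively G') is either zero or a nonzero object admitting a Harder–Narasimhan filtration with φ₋(F') > φ (respectively φ₋(G') > ψ). Then φ = ψ, and there exist unique morphisms f' : F' → G' and g : A → B such that (f', f, g) is a morphism of distinguished triangles; moreover f' and g are isomorphisms. -/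
open CategoryTheory CategoryTheory.Limits CategoryTheory.Pretriangulated

universe v u

variable (D : Type u) [Category.{v} D] [HasZeroObject D] [HasShift D ℤ] [Preadditive D]
  [∀ n : ℤ, (shiftFunctor D n).Additive] [Pretriangulated D]

variable {D}

/-!
An object with a Harder–Narasimhan filtration whose phases all exceed `c` has no nonzero map to
`P c`, since the left orthogonal of `P c` is closed under extensions. In the triangle
`F' → F → A →⁺` this kills every map from `F` to `P ψ` when `ψ < φ`; so if `ψ < φ`, then
`F ≅ G → B` vanishes, which forces `B = 0` because `Hom(G'⟦1⟧, B) = 0`. Hence `φ = ψ`. Now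
`Hom(F', B) = 0` lets `e` be completed to a morphism of triangles, and
`Hom(F', B⟦-1⟧) = Hom(F'⟦1⟧, B) = 0` makes the completion unique; uniqueness, applied to the
composites of the completions of `e` and `e⁻¹`, shows that they are mutually inverse.
-/

open ObjectProperty

lemma exists_triangleHom_mk_iff {C : Type*} [Category C] [HasShift C ℤ] {X₁ X₂ X₃ Y₁ Y₂ Y₃ : C}
    {a₁ : X₁ ⟶ X₂} {a₂ : X₂ ⟶ X₃} {a₃ : X₃ ⟶ X₁⟦(1 : ℤ)⟧}
    {b₁ : Y₁ ⟶ Y₂} {b₂ : Y₂ ⟶ Y₃} {b₃ : Y₃ ⟶ Y₁⟦(1 : ℤ)⟧}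
    (u : X₂ ⟶ Y₂) (p : (X₁ ⟶ Y₁) × (X₃ ⟶ Y₃)) :
    (∃ f : Triangle.mk a₁ a₂ a₃ ⟶ Triangle.mk b₁ b₂ b₃,
        f.hom₁ = p.1 ∧ f.hom₂ = u ∧ f.hom₃ = p.2) ↔
      a₁ ≫ u = p.1 ≫ b₁ ∧ a₂ ≫ p.2 = u ≫ b₂ ∧ a₃ ≫ p.1⟦(1 : ℤ)⟧' = p.2 ≫ b₃ := by
  obtain ⟨p₁, p₃⟩ := p
  constructor
  · rintro ⟨f, rfl, rfl, rfl⟩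
    exact ⟨f.comm₁, f.comm₂, f.comm₃⟩
  · rintro ⟨h₁, h₂, h₃⟩
    exact ⟨Triangle.homMk _ _ p₁ u p₃ h₁ h₂ h₃, rfl, rfl, rfl⟩

section

variable {T T₁ T₂ : Triangle D}

lemma exists_triangleHom_of_comp_eq_zero (hT₁ : T₁ ∈ distTriang D) (hT₂ : T₂ ∈ distTriang D)
    (u : T₁.obj₂ ⟶ T₂.obj₂) (hu : T₁.mor₁ ≫ u ≫ T₂.mor₂ = 0) :
    ∃ f : T₁ ⟶ T₂, f.hom₂ = u := by
  obtain ⟨a, ha⟩ := Triangle.coyoneda_exact₂ T₂ hT₂ (T₁.mor₁ ≫ u) (by rw [Category.assoc, hu])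
  obtain ⟨c, hc₁, hc₂⟩ := complete_distinguished_triangle_morphism T₁ T₂ hT₁ hT₂ a u ha
  exact ⟨Triangle.homMk _ _ a u c ha hc₁ hc₂, rfl⟩

lemma triangleHom_ext_of_hom_eq_zero (hT₁ : T₁ ∈ distTriang D) (hT₂ : T₂ ∈ distTriang D)
    (h₁ : ∀ k : T₁.obj₁ ⟶ T₂.obj₃⟦(-1 : ℤ)⟧, k = 0)
    (h₃ : ∀ k : T₁.obj₁⟦(1 : ℤ)⟧ ⟶ T₂.obj₃, k = 0) {f g : T₁ ⟶ T₂} (h₂ : f.hom₂ = g.hom₂) :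
    f = g := by
  refine Triangle.hom_ext f g ?_ h₂ ?_
  · have hd : (f.hom₁ - g.hom₁) ≫ T₂.mor₁ = 0 := by
      rw [Preadditive.sub_comp, ← f.comm₁, ← g.comm₁, h₂, sub_self]
    obtain ⟨k, hk⟩ := Triangle.coyoneda_exact₂ _ (inv_rot_of_distTriang T₂ hT₂) _ hd
    rw [← sub_eq_zero, hk, h₁ k]
    exact zero_comp
  · obtain ⟨k, hk⟩ := Triangle.yoneda_exact₃ T₁ hT₁ (f.hom₃ - g.hom₃)
      (by rw [Preadditive.comp_sub, f.comm₂, g.comm₂, h₂, sub_self])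
    rw [← sub_eq_zero, hk, h₃ k, comp_zero]

lemma isZero_obj₃_of_mor₂_eq_zero (hT : T ∈ distTriang D) (h₂ : T.mor₂ = 0)
    (h₃ : ∀ k : T.obj₁⟦(1 : ℤ)⟧ ⟶ T.obj₃, k = 0) : IsZero T.obj₃ := by
  obtain ⟨k, hk⟩ := Triangle.yoneda_exact₃ T hT (𝟙 _) (by rw [h₂, zero_comp])
  rw [IsZero.iff_id_eq_zero, hk, h₃ k, comp_zero]

end

namespace HNFiltration

variable {S : Slicing D} {X : D}

lemma phase_zero_le (HF : HNFiltration S X) {j : ℕ} (hj : j ≤ HF.n) :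
    HF.phase 0 ≤ HF.phase j := by
  induction j with
  | zero => exact le_rfl
  | succ k ih => exact (ih (by omega)).trans (HF.phase_lt k hj).le

lemma leftOrthogonal_of_lt_phase_zero (HF : HNFiltration S X) {c : ℝ}
    (hc : c < HF.phase 0) : leftOrthogonal (S.P c) X := by
  have key : ∀ j ≤ HF.n + 1, leftOrthogonal (S.P c) (HF.F j) := fun j hj =>
    Nat.decreasingInduction
      (fun k hk ih => ext_of_isTriangulatedClosed₂ (leftOrthogonal (S.P c)) _
        (HF.dist k (by omega)) ih
        (fun _ f hY => S.hom_zero (hc.trans_le (HF.phase_zero_le (by omega)))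
          (HF.mem k (by omega)) hY f))
      (fun _ f _ => HF.isZero_top.eq_of_src f 0) hj
  exact HF.F_zero ▸ key 0 (Nat.zero_le _)

end HNFiltration

namespace Slicing

variable (S : Slicing D)

lemma leftOrthogonal_of_isZero_or_lt_phase_zero {X : D} {c c' : ℝ}
    (hX : IsZero X ∨ ∃ HF : HNFiltration S X, c < HF.phase 0) (hc' : c' ≤ c) :
    leftOrthogonal (S.P c') X := by
  rcases hX with hX | ⟨HF, hc⟩
  · exact fun _ f _ => hX.eq_of_src f 0
  · exact HF.leftOrthogonal_of_lt_phase_zero (hc'.trans_lt hc)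

lemma shift_neg_one_mem_s9 {Y : D} {c : ℝ} (hY : S.P c Y) : S.P (c - 1) (Y⟦(-1 : ℤ)⟧) := by
  apply S.shift_mem'
  rw [sub_add_cancel]
  exact S.mem_of_iso ((shiftFunctorCompIsoId D (-1 : ℤ) 1 (by norm_num)).app Y).symm hY

lemma hom_shift_one_eq_zero {X Y : D} {c : ℝ} (hX : leftOrthogonal (S.P (c - 1)) X)
    (hY : S.P c Y) (f : X⟦(1 : ℤ)⟧ ⟶ Y) : f = 0 := by
  obtain ⟨g, rfl⟩ := ((shiftEquiv D (1 : ℤ)).toAdjunction.homEquiv _ _).symm.surjective f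
  rw [Adjunction.homEquiv_counit, hX g (S.shift_neg_one_mem_s9 hY), Functor.map_zero, zero_comp]
  rfl

variable {T₁ T₂ : Triangle D}

lemma isZero_obj₃_of_phase_lt {φ ψ : ℝ} (hψφ : ψ < φ) (hT₁ : T₁ ∈ distTriang D)
    (hT₂ : T₂ ∈ distTriang D) (h₁ : leftOrthogonal (S.P ψ) T₁.obj₁) (hA : S.P φ T₁.obj₃)
    (h₂ : leftOrthogonal (S.P (ψ - 1)) T₂.obj₁) (hB : S.P ψ T₂.obj₃)
    (e : T₁.obj₂ ≅ T₂.obj₂) : IsZero T₂.obj₃ := by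
  have hF : leftOrthogonal (S.P ψ) T₁.obj₂ := ext_of_isTriangulatedClosed₂ _ _ hT₁ h₁
    (fun _ f hY => S.hom_zero hψφ hA hY f)
  refine isZero_obj₃_of_mor₂_eq_zero hT₂ ?_ (S.hom_shift_one_eq_zero h₂ hB)
  rw [← cancel_epi e.hom, comp_zero]
  exact hF _ hB

lemma exists_triangleHom {c : ℝ} (hT₁ : T₁ ∈ distTriang D) (hT₂ : T₂ ∈ distTriang D)
    (h₁ : leftOrthogonal (S.P c) T₁.obj₁) (h₃ : S.P c T₂.obj₃) (u : T₁.obj₂ ⟶ T₂.obj₂) :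
    ∃ f : T₁ ⟶ T₂, f.hom₂ = u :=
  exists_triangleHom_of_comp_eq_zero hT₁ hT₂ u (h₁ _ h₃)

lemma triangleHom_ext {c : ℝ} (hT₁ : T₁ ∈ distTriang D) (hT₂ : T₂ ∈ distTriang D)
    (h₁ : leftOrthogonal (S.P (c - 1)) T₁.obj₁) (h₃ : S.P c T₂.obj₃) {f g : T₁ ⟶ T₂}
    (h₂ : f.hom₂ = g.hom₂) : f = g :=
  triangleHom_ext_of_hom_eq_zero hT₁ hT₂ (fun k => h₁ k (S.shift_neg_one_mem_s9 h₃))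
    (S.hom_shift_one_eq_zero h₁ h₃) h₂

lemma isIso_triangleHom {c : ℝ} (hT₁ : T₁ ∈ distTriang D) (hT₂ : T₂ ∈ distTriang D)
    (h₁ : ∀ c' ≤ c, leftOrthogonal (S.P c') T₁.obj₁)
    (h₂ : ∀ c' ≤ c, leftOrthogonal (S.P c') T₂.obj₁)
    (hA : S.P c T₁.obj₃) (hB : S.P c T₂.obj₃) (e : T₁.obj₂ ≅ T₂.obj₂) (f : T₁ ⟶ T₂)
    (hf : f.hom₂ = e.hom) : IsIso f := by
  obtain ⟨g, hg⟩ := S.exists_triangleHom hT₂ hT₁ (h₂ c le_rfl) hA e.inv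
  refine ⟨g, S.triangleHom_ext hT₁ hT₁ (h₁ _ (by linarith)) hA ?_,
    S.triangleHom_ext hT₂ hT₂ (h₂ _ (by linarith)) hB ?_⟩
  all_goals simp [hf, hg]

end Slicing

theorem statement9
    {D : Type u} [Category.{v} D] [HasZeroObject D] [HasShift D ℤ] [Preadditive D]
    [∀ n : ℤ, (shiftFunctor D n).Additive] [Pretriangulated D]
    (S : Slicing D) {F G F' G' A B : D} (e : F ≅ G)
    (a₁ : F' ⟶ F) (a₂ : F ⟶ A) (a₃ : A ⟶ F'⟦(1 : ℤ)⟧)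
    (b₁ : G' ⟶ G) (b₂ : G ⟶ B) (b₃ : B ⟶ G'⟦(1 : ℤ)⟧)
    (hTa : Triangle.mk a₁ a₂ a₃ ∈ distTriang D)
    (hTb : Triangle.mk b₁ b₂ b₃ ∈ distTriang D)
    {φ ψ : ℝ} (hA : S.P φ A) (hA₀ : ¬ IsZero A) (hB : S.P ψ B) (hB₀ : ¬ IsZero B)
    (hF' : IsZero F' ∨ (¬ IsZero F' ∧ ∃ HF : HNFiltration S F', φ < HF.phase 0))
    (hG' : IsZero G' ∨ (¬ IsZero G' ∧ ∃ HG : HNFiltration S G', ψ < HG.phase 0)) :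
    φ = ψ ∧
    (∃! p : (F' ⟶ G') × (A ⟶ B),
      a₁ ≫ e.hom = p.1 ≫ b₁ ∧
      a₂ ≫ p.2 = e.hom ≫ b₂ ∧
      a₃ ≫ (p.1)⟦(1 : ℤ)⟧' = p.2 ≫ b₃) ∧
    (∀ p : (F' ⟶ G') × (A ⟶ B),
      (a₁ ≫ e.hom = p.1 ≫ b₁ ∧
       a₂ ≫ p.2 = e.hom ≫ b₂ ∧
       a₃ ≫ (p.1)⟦(1 : ℤ)⟧' = p.2 ≫ b₃) → IsIso p.1 ∧ IsIso p.2) := by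
  have hF : ∀ c ≤ φ, leftOrthogonal (S.P c) F' := fun _ =>
    S.leftOrthogonal_of_isZero_or_lt_phase_zero (hF'.imp id And.right)
  have hG : ∀ c ≤ ψ, leftOrthogonal (S.P c) G' := fun _ =>
    S.leftOrthogonal_of_isZero_or_lt_phase_zero (hG'.imp id And.right)
  have hφψ : φ = ψ := by
    refine le_antisymm (not_lt.1 fun h => hB₀ ?_) (not_lt.1 fun h => hA₀ ?_)
    · exact S.isZero_obj₃_of_phase_lt h hTa hTb (hF _ h.le) hA (hG _ (by linarith)) hB e
    · exact S.isZero_obj₃_of_phase_lt h hTb hTa (hG _ h.le) hB (hF _ (by linarith)) hA e.symm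
  subst hφψ
  obtain ⟨f, hf⟩ := S.exists_triangleHom hTa hTb (hF _ le_rfl) hB e.hom
  refine ⟨rfl, ⟨(f.hom₁, f.hom₃), (exists_triangleHom_mk_iff _ _).1 ⟨f, rfl, hf, rfl⟩,
    fun ⟨p₁, p₃⟩ hp => ?_⟩, fun ⟨p₁, p₃⟩ hp => ?_⟩
  · obtain ⟨g, rfl, hg, rfl⟩ := (exists_triangleHom_mk_iff _ _).2 hp
    rw [S.triangleHom_ext hTa hTb (hF _ (by linarith)) hB (hg.trans hf.symm)]
  · obtain ⟨g, rfl, hg, rfl⟩ := (exists_triangleHom_mk_iff _ _).2 hp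
    have := S.isIso_triangleHom hTa hTb hF hG hA hB e g hg
    exact ⟨inferInstanceAs (IsIso g.hom₁), inferInstanceAs (IsIso g.hom₃)⟩
end
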